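/- Let 1 ≤ p < ∞ and let f(x,ω,y) = Σ_{i=1}^m φ_i(x)ψ_i(ω)g_i(y) with φ_i continuous with compact support in Q, ψ_i ∈ C^∞(Ω), and g_i continuous and Y-periodic on ℝ^N. Then, as ε → 0, ∫_{Q×Ω} |f(x, T(x/ε)ω, x/ε²)|^p dx dμ(ω) → ∫_Q ∫_Ω ∫_Y |f(x,ω,y)|^p dy dμ(ω) dx (the mean-value property for admissible test functions). -/

import Mathlib

open MeasureTheory Filter
open scoped ENNReal Topology

noncomputable section

abbrev RN (N : ℕ) := Fin N → ℝ

/-- The unit cube `Y = (0,1)^N`. -/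
def Ycube (N : ℕ) : Set (RN N) := Set.univ.pi fun _ => Set.Ioo (0 : ℝ) 1

/-- An `N`-dimensional dynamical system on a measure space `(Ω, μ)`. -/
structure DynSys (Ω : Type*) [MeasurableSpace Ω] (μ : Measure Ω) (N : ℕ) where
  T : RN N → Ω → Ω
  bijective : ∀ y, Function.Bijective (T y)
  T_zero : T 0 = id
  T_add : ∀ y₁ y₂, T (y₁ + y₂) = T y₁ ∘ T y₂
  measurable_T : ∀ y, Measurable (T y)
  measurePreserving : ∀ y, MeasurePreserving (T y) μ μ
  measurable_pair : Measurable fun p : RN N × Ω => T p.1 p.2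

variable {N : ℕ} {Ω : Type*} [MeasurableSpace Ω] {μ : Measure Ω}

/-- `g` is the `i`-th stochastic derivative of `f`, as a strong `L^p` limit
of difference quotients along the flow of the dynamical system. -/
def HasStochDeriv (DS : DynSys Ω μ N) (pp : ℝ≥0∞) (f g : Ω → ℝ) (i : Fin N) : Prop :=
  Tendsto (fun ι : ℝ =>
      eLpNorm (fun ω => (f (DS.T (fun j => if j = i then ι else 0) ω) - f ω) / ι - g ω) pp μ)
    (𝓝[≠] (0 : ℝ)) (𝓝 0)

/-- `g` is the `i`-th stochastic derivative of `f` in every `L^q`, `1 ≤ q < ∞`. -/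
def HasStochDerivAll (DS : DynSys Ω μ N) (f g : Ω → ℝ) (i : Fin N) : Prop :=
  ∀ q : ℝ, 1 ≤ q → HasStochDeriv DS (ENNReal.ofReal q) f g i

/-- Membership in `C^∞(Ω)` : `f` is essentially bounded and all of its iterated
stochastic derivatives exist and are essentially bounded. -/
def IsStochSmooth (DS : DynSys Ω μ N) (f : Ω → ℝ) : Prop :=
  ∃ D : List (Fin N) → Ω → ℝ,
    D [] = f ∧
    (∀ l, Measurable (D l) ∧ ∃ C : ℝ, ∀ᵐ ω ∂μ, |D l ω| ≤ C) ∧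
    ∀ l i, HasStochDerivAll DS (D l) (D (i :: l)) i

/-- `G` is the stochastic gradient `D_ω f` of `f`. -/
def HasStochGrad (DS : DynSys Ω μ N) (f : Ω → ℝ) (G : Ω → RN N) : Prop :=
  ∀ i, HasStochDerivAll DS f (fun ω => G ω i) i

/-- A smooth function compactly supported in the open set `Q` (an element of `C_c^∞(Q)`). -/
def IsTestOn (Q : Set (RN N)) (φ : RN N → ℝ) : Prop :=
  ContDiff ℝ (⊤ : ℕ∞) φ ∧ HasCompactSupport φ ∧ tsupport φ ⊆ Q

/-- `Y`-periodicity of a function on `ℝ^N`. -/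
def IsYPeriodic (g : RN N → ℝ) : Prop :=
  ∀ (y : RN N) (k : Fin N → ℤ), g (y + fun j => (k j : ℝ)) = g y

/-- An element of `C^∞_per(Y)`. -/
def IsSmoothPeriodic (g : RN N → ℝ) : Prop := ContDiff ℝ (⊤ : ℕ∞) g ∧ IsYPeriodic g

/-- The product measure on `Q × Ω`. -/
def muQ (Q : Set (RN N)) (μ : Measure Ω) : Measure (RN N × Ω) :=
  (volume.restrict Q).prod μ

/-- Admissible test functions for stochastic two-scale convergence :
finite sums of elementary tensors `φ(x) ψ(ω) g(y)` with `φ ∈ C_c^∞(Q)`,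
`ψ ∈ C^∞(Ω)` and `g ∈ C^∞_per(Y)`. -/
def IsSimpleTest (DS : DynSys Ω μ N) (Q : Set (RN N)) (f : RN N → Ω → RN N → ℝ) : Prop :=
  ∃ (m : ℕ) (φ : Fin m → RN N → ℝ) (ψ : Fin m → Ω → ℝ) (g : Fin m → RN N → ℝ),
    (∀ i, IsTestOn Q (φ i)) ∧ (∀ i, IsStochSmooth DS (ψ i)) ∧
    (∀ i, IsSmoothPeriodic (g i)) ∧
    ∀ x ω y, f x ω y = ∑ i, φ i x * ψ i ω * g i y

/-- Stochastic two-scale convergence of a family `(u_ε)_{ε>0}` as `ε → 0⁺`. -/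
def StochTwoScale (DS : DynSys Ω μ N) (Q : Set (RN N)) (u : ℝ → RN N × Ω → ℝ)
    (u₀ : RN N × Ω → RN N → ℝ) : Prop :=
  ∀ f, IsSimpleTest DS Q f →
    Tendsto (fun ε : ℝ =>
        ∫ z, u ε z * f z.1 (DS.T (ε⁻¹ • z.1) z.2) ((ε ^ 2)⁻¹ • z.1) ∂(muQ Q μ))
      (𝓝[>] (0 : ℝ))
      (𝓝 (∫ z, (∫ y in Ycube N, u₀ z y * f z.1 z.2 y) ∂(muQ Q μ)))

/-- Stochastic two-scale convergence along a sequence `ε : ℕ → ℝ`. -/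
def StochTwoScaleSeq (DS : DynSys Ω μ N) (Q : Set (RN N)) (ε : ℕ → ℝ)
    (u : ℕ → RN N × Ω → ℝ) (u₀ : RN N × Ω → RN N → ℝ) : Prop :=
  ∀ f, IsSimpleTest DS Q f →
    Tendsto (fun n =>
        ∫ z, u n z * f z.1 (DS.T ((ε n)⁻¹ • z.1) z.2) ((ε n ^ 2)⁻¹ • z.1) ∂(muQ Q μ))
      atTop
      (𝓝 (∫ z, (∫ y in Ycube N, u₀ z y * f z.1 z.2 y) ∂(muQ Q μ)))

/-- Membership in `L^p(Q×Ω ; L^p_per(Y))` for a two-scale limit. -/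
def MemTwoScaleLimit (Q : Set (RN N)) (μ : Measure Ω) (pp : ℝ≥0∞)
    (u₀ : RN N × Ω → RN N → ℝ) : Prop :=
  (∀ z, IsYPeriodic (u₀ z)) ∧
    MemLp (fun w : (RN N × Ω) × RN N => u₀ w.1 w.2) pp
      ((muQ Q μ).prod (volume.restrict (Ycube N)))

def Yico (N : ℕ) : Set (RN N) := Set.univ.pi fun _ => Set.Ico (0 : ℝ) 1

def frY (y : RN N) : RN N := fun i => Int.fract (y i)

lemma frY_mem_Yico (y : RN N) : frY y ∈ Yico N := by
  intro i _
  exact ⟨Int.fract_nonneg _, Int.fract_lt_one _⟩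

lemma IsYPeriodic.frY_eq {g : RN N → ℝ} (hg : IsYPeriodic g) (y : RN N) : g (frY y) = g y := by
  have : y = frY y + fun j => ((⌊y j⌋ : ℤ) : ℝ) := by
    funext i
    show y i = Int.fract (y i) + _
    rw [Int.fract]; ring
  conv_rhs => rw [this]
  exact (hg (frY y) fun j => ⌊y j⌋).symm

lemma restrict_Ycube_eq (N : ℕ) :
    (volume : Measure (RN N)).restrict (Ycube N) = volume.restrict (Yico N) := by
  apply Measure.restrict_congr_set
  have h1 : Ycube N =ᵐ[(volume : Measure (RN N))] Set.Icc (fun _ => 0) (fun _ => 1) :=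
    Measure.univ_pi_Ioo_ae_eq_Icc
  have h2 : Yico N =ᵐ[(volume : Measure (RN N))] Set.Icc (fun _ => 0) (fun _ => 1) :=
    Measure.univ_pi_Ico_ae_eq_Icc
  exact h1.trans h2.symm

lemma volume_Yico (N : ℕ) : (volume : Measure (RN N)) (Yico N) = 1 := by
  rw [Yico, volume_pi_pi]
  simp [Real.volume_Ico]

lemma measurableSet_Yico (N : ℕ) : MeasurableSet (Yico N) :=
  MeasurableSet.univ_pi fun _ => measurableSet_Ico

open Set in
abbrev latt (N : ℕ) : AddSubgroup (RN N) :=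
  (Submodule.span ℤ (Set.range (Pi.basisFun ℝ (Fin N)))).toAddSubgroup

lemma fundDom_eq : ZSpan.fundamentalDomain (Pi.basisFun ℝ (Fin N)) = Yico N := by
  ext x
  simp [ZSpan.fundamentalDomain, Yico, Set.mem_univ_pi]

lemma isAddFund : IsAddFundamentalDomain (latt N) (Yico N) (volume : Measure (RN N)) := by
  rw [← fundDom_eq]
  exact ZSpan.isAddFundamentalDomain' (Pi.basisFun ℝ (Fin N)) volume

lemma latt_mem (ℓ : latt N) : ∃ k : Fin N → ℤ, (ℓ : RN N) = fun i => (k i : ℝ) := by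
  have h := ((Pi.basisFun ℝ (Fin N)).mem_span_iff_repr_mem ℤ ℓ).mp ℓ.2
  choose k hk using h
  refine ⟨k, funext fun i => ?_⟩
  have := hk i
  simp only [Pi.basisFun_repr] at this
  rw [← this]; rfl

instance : VAddCommClass (RN N) (latt N) (RN N) :=
  ⟨fun a b c => by
    show a + ((b : RN N) + c) = (b : RN N) + (a + c)
    ring⟩

instance : Countable (latt N) :=
  inferInstanceAs (Countable (Submodule.span ℤ (Set.range (Pi.basisFun ℝ (Fin N)))))

open scoped Pointwise in
lemma integral_Yico_add_left {g : RN N → ℝ} (hg : IsYPeriodic g) (s : RN N) :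
    ∫ t in Yico N, g (s + t) = ∫ t in Yico N, g t := by
  have hinv : ∀ (ℓ : latt N) (x : RN N), g (ℓ +ᵥ x) = g x := by
    intro ℓ x
    obtain ⟨k, hk⟩ := latt_mem ℓ
    show g ((ℓ : RN N) + x) = g x
    rw [hk, add_comm]
    exact hg x k
  have hfd2 : IsAddFundamentalDomain (latt N) (s +ᵥ Yico N) (volume : Measure (RN N)) :=
    isAddFund.vadd_of_comm s
  have h1 : ∫ t in s +ᵥ Yico N, g t = ∫ t in Yico N, g t :=
    hfd2.setIntegral_eq isAddFund hinv
  rw [← h1]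
  have : s +ᵥ Yico N = (fun t => s + t) '' Yico N := rfl
  rw [this, (measurePreserving_add_left (volume : Measure (RN N)) s).setIntegral_image_emb
    (measurableEmbedding_addLeft s) g (Yico N)]

def Yicc (N : ℕ) : Set (RN N) := Set.univ.pi fun _ => Set.Icc (0 : ℝ) 1

lemma Yicc_compact (N : ℕ) : IsCompact (Yicc N) :=
  isCompact_univ_pi fun _ => isCompact_Icc

lemma Yico_subset_Yicc (N : ℕ) : Yico N ⊆ Yicc N := fun x hx i hi =>
  ⟨(hx i hi).1, le_of_lt (hx i hi).2⟩

lemma norm_le_one_of_mem_Yico {t : RN N} (ht : t ∈ Yico N) : ‖t‖ ≤ 1 := by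
  rw [pi_norm_le_iff_of_nonneg zero_le_one]
  intro i
  have := ht i (Set.mem_univ i)
  rw [Real.norm_eq_abs, abs_le]
  constructor <;> [linarith [this.1]; linarith [this.2.le]]

lemma oscillation_limit
    (F : RN N → RN N → ℝ) (hFc : Continuous fun q : RN N × RN N => F q.1 q.2)
    (K : Set (RN N)) (hK : IsCompact K)
    (hsupp : ∀ x ∉ K, ∀ y, F x y = 0)
    (hper : ∀ x, IsYPeriodic (F x)) :
    Tendsto (fun δ : ℝ => ∫ x, F x (δ⁻¹ • x)) (𝓝[>] (0:ℝ))
      (𝓝 (∫ x, ∫ t in Yico N, F x t)) := by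
  classical
  set K1 : Set (RN N) := Metric.cthickening 1 K with hK1def
  have hK1 : IsCompact K1 := hK.cthickening
  have hKK1 : K ⊆ K1 := Metric.self_subset_cthickening K
  have hK1fin : (volume : Measure (RN N)) K1 < ∞ := hK1.measure_lt_top
  set C1 : ℝ := ((volume : Measure (RN N)) K1).toReal with hC1def
  have hC1nn : 0 ≤ C1 := ENNReal.toReal_nonneg
  -- uniform continuity key estimate
  have keyUC : ∀ e : ℝ, 0 < e → ∃ d : ℝ, 0 < d ∧ d ≤ 1 ∧
      ∀ (x h y : RN N), ‖h‖ ≤ d → |F (x + h) y - F x y| ≤ e := by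
    intro e he
    have hUC := ((hK1.prod (Yicc_compact N)).uniformContinuousOn_of_continuous
      hFc.continuousOn)
    rw [Metric.uniformContinuousOn_iff] at hUC
    obtain ⟨d, hd, hUC⟩ := hUC e he
    refine ⟨min (d/2) 1, lt_min (by linarith) one_pos, min_le_right _ _, ?_⟩
    intro x h y hh
    have hh1 : ‖h‖ ≤ 1 := hh.trans (min_le_right _ _)
    have hhd : ‖h‖ < d := lt_of_le_of_lt (hh.trans (min_le_left _ _)) (by linarith)
    by_cases hxK : x ∈ K ∨ x + h ∈ K
    · have hx1 : x ∈ K1 ∧ x + h ∈ K1 := by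
        rcases hxK with hx | hx
        · refine ⟨hKK1 hx, Metric.mem_cthickening_of_dist_le _ _ _ _ hx ?_⟩
          rw [dist_eq_norm]; simpa using hh1
        · refine ⟨Metric.mem_cthickening_of_dist_le _ _ _ _ hx ?_, hKK1 hx⟩
          rw [dist_eq_norm]; simpa [norm_neg] using hh1
      set y' := frY y with hy'
      have hy'm : y' ∈ Yicc N := Yico_subset_Yicc N (frY_mem_Yico y)
      have e1 : F (x + h) y = F (x + h) y' := ((hper (x + h)).frY_eq y).symm
      have e2 : F x y = F x y' := ((hper x).frY_eq y).symm
      rw [e1, e2]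
      have hd1 : ((x + h, y') : RN N × RN N) ∈ K1 ×ˢ Yicc N := ⟨hx1.2, hy'm⟩
      have hd2 : ((x, y') : RN N × RN N) ∈ K1 ×ˢ Yicc N := ⟨hx1.1, hy'm⟩
      have hdist : dist ((x + h, y') : RN N × RN N) (x, y') < d := by
        rw [Prod.dist_eq]
        simp only [dist_self]
        rw [dist_eq_norm]
        simpa using lt_of_le_of_lt (le_max_left _ 0) (max_lt hhd hd)
      have := hUC _ hd1 _ hd2 hdist
      rw [Real.dist_eq] at this
      exact this.le
    · push_neg at hxK
      rw [hsupp _ hxK.2 y, hsupp _ hxK.1 y, sub_zero, abs_zero]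
      exact he.le
  -- integrability helper
  have integ1 : ∀ (c : RN N) (G : RN N → RN N), Continuous G →
      Integrable (fun x => F (x + c) (G x)) volume := by
    intro c G hG
    have hc : Continuous fun x => F (x + c) (G x) :=
      hFc.comp ((continuous_id.add continuous_const).prodMk hG)
    apply hc.integrable_of_hasCompactSupport
    apply HasCompactSupport.intro ((Homeomorph.addRight c).isCompact_preimage.mpr hK)
    intro x hx
    exact hsupp _ hx _
  -- shift identity
  have shift : ∀ δ : ℝ, 0 < δ → ∀ t : RN N,
      (∫ x, F (x + δ • t) (δ⁻¹ • x + t)) = ∫ x, F x (δ⁻¹ • x) := by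
    intro δ hδ t
    have h0 := MeasureTheory.integral_add_right_eq_self (μ := volume)
      (fun x => F x (δ⁻¹ • x)) (δ • t)
    rw [← h0]
    congr 1
    funext x
    rw [smul_add, smul_smul, inv_mul_cancel₀ hδ.ne', one_smul]
  -- product integrability
  have prodInt : ∀ δ : ℝ, 0 < δ → Integrable
      (Function.uncurry fun x t => F x (δ⁻¹ • x + t))
      ((volume : Measure (RN N)).prod (volume.restrict (Yico N))) := by
    intro δ hδ
    have hGc : Continuous (Function.uncurry fun x t : RN N => F x (δ⁻¹ • x + t)) := by
      show Continuous fun q : RN N × RN N => F q.1 (δ⁻¹ • q.1 + q.2)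
      exact hFc.comp
        (continuous_fst.prodMk ((continuous_fst.const_smul δ⁻¹).add continuous_snd))
    obtain ⟨C, hC⟩ := (hK.prod (Yicc_compact N)).exists_bound_of_continuousOn hFc.continuousOn
    refine Integrable.mono' (g := Set.indicator
      (K ×ˢ (Set.univ : Set (RN N))) fun _ => max C 0) ?_ hGc.aestronglyMeasurable ?_
    · rw [integrable_indicator_iff (hK.measurableSet.prod MeasurableSet.univ)]
      refine (integrableOn_const_iff (C := max C 0)).mpr (Or.inr ?_)
      rw [Measure.prod_prod]
      exact ENNReal.mul_lt_top hK.measure_lt_top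
        (by rw [Measure.restrict_apply_univ, volume_Yico]; exact ENNReal.one_lt_top)
    · apply Filter.Eventually.of_forall
      intro q
      by_cases hq : q.1 ∈ K
      · rw [Set.indicator_of_mem (by exact ⟨hq, Set.mem_univ _⟩)]
        have hy' : frY (δ⁻¹ • q.1 + q.2) ∈ Yicc N := Yico_subset_Yicc N (frY_mem_Yico _)
        have : F q.1 (δ⁻¹ • q.1 + q.2) = F q.1 (frY (δ⁻¹ • q.1 + q.2)) :=
          ((hper q.1).frY_eq _).symm
        rw [Function.uncurry, Real.norm_eq_abs, this]
        exact le_trans (hC (q.1, frY (δ⁻¹ • q.1 + q.2)) ⟨hq, hy'⟩) (le_max_left _ _)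
      · rw [Function.uncurry, hsupp _ hq]
        simp only [norm_zero]
        exact Set.indicator_nonneg (fun _ _ => le_max_right _ _) _
  -- finiteness instance
  haveI hfinY : IsFiniteMeasure ((volume : Measure (RN N)).restrict (Yico N)) :=
    ⟨by rw [Measure.restrict_apply_univ, volume_Yico]; exact ENNReal.one_lt_top⟩
  -- conclude via epsilon-delta
  rw [Metric.tendsto_nhdsWithin_nhds]
  intro e he
  set e' := e / (C1 + 2) with he'def
  have he' : 0 < e' := div_pos he (by linarith)
  have hee : e' * (C1 + 2) = e := by
    rw [he'def]; field_simp
  obtain ⟨d, hd0, hd1, hUC⟩ := keyUC e' he'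
  refine ⟨d, hd0, ?_⟩
  intro δ hδmem hδd
  have hδ : 0 < δ := hδmem
  have hδd' : δ < d := by rwa [Real.dist_eq, sub_zero, abs_of_pos hδ] at hδd
  have hδ1 : δ ≤ 1 := le_of_lt (lt_of_lt_of_le hδd' hd1)
  set J : ℝ := ∫ x, ∫ t in Yico N, F x t with hJdef
  set Iδ : ℝ := ∫ x, F x (δ⁻¹ • x) with hIdef
  have hprod := prodInt δ hδ
  have hJ1 : J = ∫ t in Yico N, ∫ x, F x (δ⁻¹ • x + t) := by
    have h1 : ∀ x : RN N, (∫ t in Yico N, F x t) = ∫ t in Yico N, F x (δ⁻¹ • x + t) :=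
      fun x => (integral_Yico_add_left (hper x) (δ⁻¹ • x)).symm
    calc J = ∫ x, ∫ t in Yico N, F x (δ⁻¹ • x + t) := by
            rw [hJdef]; congr 1; funext x; exact h1 x
      _ = ∫ t in Yico N, ∫ x, F x (δ⁻¹ • x + t) := integral_integral_swap hprod
  have hBint : Integrable (fun t => ∫ x, F x (δ⁻¹ • x + t))
      ((volume : Measure (RN N)).restrict (Yico N)) := by
    exact hprod.integral_prod_right
  have hIδ : Iδ = ∫ t in Yico N, (fun _ => Iδ) t := by
    rw [setIntegral_const, measureReal_def, volume_Yico]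
    simp
  have key : dist Iδ J ≤ e' * C1 := by
    rw [Real.dist_eq, hJ1]
    nth_rewrite 1 [hIδ]
    rw [← integral_sub (integrable_const _) hBint]
    have hb : ∀ t ∈ Yico N, ‖Iδ - ∫ x, F x (δ⁻¹ • x + t)‖ ≤ e' * C1 := by
      intro t ht
      have htn : ‖t‖ ≤ 1 := norm_le_one_of_mem_Yico ht
      have hδtn : ‖δ • t‖ ≤ δ := by
        rw [norm_smul, Real.norm_eq_abs, abs_of_pos hδ]
        nlinarith [norm_nonneg t]
      have hshift := shift δ hδ t
      rw [hIdef, ← hshift]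
      have contG : Continuous fun x : RN N => δ⁻¹ • x + t :=
        (continuous_id.const_smul δ⁻¹).add continuous_const
      have hint1 : Integrable (fun x => F (x + δ • t) (δ⁻¹ • x + t)) volume :=
        integ1 (δ • t) _ contG
      have hint2 : Integrable (fun x => F x (δ⁻¹ • x + t)) volume := by
        have := integ1 0 (fun x => δ⁻¹ • x + t) contG
        simpa using this
      rw [← integral_sub hint1 hint2]
      have hzero : ∀ x ∉ K1,
          F (x + δ • t) (δ⁻¹ • x + t) - F x (δ⁻¹ • x + t) = 0 := by
        intro x hx
        have hxK : x ∉ K := fun h => hx (hKK1 h)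
        have hxhK : x + δ • t ∉ K := by
          intro h
          apply hx
          refine Metric.mem_cthickening_of_dist_le x (x + δ • t) 1 K h ?_
          have : dist x (x + δ • t) = ‖δ • t‖ := by
            rw [dist_eq_norm]
            simp
          rw [this]
          exact hδtn.trans hδ1
        rw [hsupp _ hxhK, hsupp _ hxK, sub_zero]
      rw [← setIntegral_eq_integral_of_forall_compl_eq_zero hzero]
      have hbx : ∀ x ∈ K1,
          ‖F (x + δ • t) (δ⁻¹ • x + t) - F x (δ⁻¹ • x + t)‖ ≤ e' := by
        intro x _
        rw [Real.norm_eq_abs]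
        exact hUC x (δ • t) (δ⁻¹ • x + t) (hδtn.trans hδd'.le)
      calc ‖∫ x in K1, (F (x + δ • t) (δ⁻¹ • x + t) - F x (δ⁻¹ • x + t))‖
          ≤ e' * ((volume : Measure (RN N)) K1).toReal :=
            norm_setIntegral_le_of_norm_le_const hK1fin hbx
        _ = e' * C1 := by rw [hC1def]
    calc ‖∫ t in Yico N, ((fun _ => Iδ) t - ∫ x, F x (δ⁻¹ • x + t))‖
        ≤ (e' * C1) * ((volume : Measure (RN N)) (Yico N)).toReal :=
          norm_setIntegral_le_of_norm_le_const (μ := volume)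
            (by rw [volume_Yico]; exact ENNReal.one_lt_top) hb
      _ = e' * C1 := by rw [volume_Yico]; simp
  have : e' * C1 < e := by nlinarith
  exact lt_of_le_of_lt key this

def dynEquiv (DS : DynSys Ω μ N) (y : RN N) : Ω ≃ᵐ Ω where
  toFun := DS.T y
  invFun := DS.T (-y)
  left_inv := fun ω => by
    have h : DS.T (-y) (DS.T y ω) = DS.T (-y + y) ω := by rw [DS.T_add]; rfl
    rw [h, neg_add_cancel, DS.T_zero]; rfl
  right_inv := fun ω => by
    have h : DS.T y (DS.T (-y) ω) = DS.T (y + -y) ω := by rw [DS.T_add]; rfl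
    rw [h, add_neg_cancel, DS.T_zero]; rfl
  measurable_toFun := DS.measurable_T y
  measurable_invFun := DS.measurable_T (-y)

/-- **Mean-value property for admissible test functions.**
For `f(x,ω,y) = Σ φᵢ(x) ψᵢ(ω) gᵢ(y)` with `φᵢ` continuous with compact support in `Q`,
`ψᵢ ∈ C^∞(Ω)` and `gᵢ` continuous `Y`-periodic, one has
`∫_{Q×Ω} |f(x, T(x/ε)ω, x/ε²)|^p dx dμ → ∫_Q ∫_Ω ∫_Y |f(x,ω,y)|^p dy dμ dx` as `ε → 0⁺`. -/
theorem meanValue_admissible_test_functions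
    [IsProbabilityMeasure μ]
    (hsep : ∀ (q : ℝ≥0∞) [Fact (1 ≤ q)], TopologicalSpace.SeparableSpace (Lp ℝ q μ))
    (DS : DynSys Ω μ N) (Q : Set (RN N)) (hQo : IsOpen Q) (hQb : Bornology.IsBounded Q)
    (p : ℝ) (hp : 1 ≤ p)
    (m : ℕ) (φ : Fin m → RN N → ℝ) (ψ : Fin m → Ω → ℝ) (g : Fin m → RN N → ℝ)
    (hφ : ∀ i, Continuous (φ i) ∧ HasCompactSupport (φ i) ∧ tsupport (φ i) ⊆ Q)
    (hψ : ∀ i, IsStochSmooth DS (ψ i))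
    (hg : ∀ i, Continuous (g i) ∧ IsYPeriodic (g i))
    (f : RN N → Ω → RN N → ℝ)
    (hf : ∀ x ω y, f x ω y = ∑ i, φ i x * ψ i ω * g i y) :
    Tendsto (fun ε : ℝ =>
        ∫ z, |f z.1 (DS.T (ε⁻¹ • z.1) z.2) ((ε ^ 2)⁻¹ • z.1)| ^ p ∂(muQ Q μ))
      (𝓝[>] (0 : ℝ))
      (𝓝 (∫ z, (∫ y in Ycube N, |f z.1 z.2 y| ^ p) ∂(muQ Q μ))) := by
  classical
  have hp0 : (0:ℝ) ≤ p := le_trans zero_le_one hp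
  have hpne : p ≠ 0 := by linarith
  have habs : Continuous fun u : ℝ => |u| ^ p :=
    continuous_abs.rpow_const fun _ => Or.inr hp0
  -- ψ measurability and bounds
  have hψm : ∀ i, Measurable (ψ i) := by
    intro i
    obtain ⟨D, hD0, hDm, _⟩ := hψ i
    rw [← hD0]; exact (hDm []).1
  have hψb : ∀ i, ∃ C : ℝ, 0 ≤ C ∧ ∀ᵐ ω ∂μ, |ψ i ω| ≤ C := by
    intro i
    obtain ⟨D, hD0, hDm, _⟩ := hψ i
    obtain ⟨C, hC⟩ := (hDm []).2
    refine ⟨max C 0, le_max_right _ _, ?_⟩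
    filter_upwards [hC] with ω h
    rw [← hD0]
    exact h.trans (le_max_left _ _)
  choose C hC0 hCae using hψb
  -- the good set E
  set E : Set Ω := {ω | ∀ i, |ψ i ω| ≤ C i} with hEdef
  have hEmeas : MeasurableSet E := by
    have hE2 : E = ⋂ i, {ω | |ψ i ω| ≤ C i} := by ext ω; simp [hEdef]
    rw [hE2]
    exact MeasurableSet.iInter fun i => measurableSet_le (hψm i).abs measurable_const
  have hEae : ∀ᵐ ω ∂μ, ω ∈ E := ae_all_iff.mpr hCae
  have hEc : μ Eᶜ = 0 := by
    have := hEae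
    rw [ae_iff] at this
    exact this
  -- bounds for φ and g
  have hφb : ∀ i, ∃ A : ℝ, 0 ≤ A ∧ ∀ x, |φ i x| ≤ A := by
    intro i
    obtain ⟨A, hA⟩ := (hφ i).2.1.exists_bound_of_continuous (hφ i).1
    exact ⟨max A 0, le_max_right _ _, fun x => le_trans (hA x) (le_max_left _ _)⟩
  choose Aφ hAφ0 hAφ using hφb
  have hgb : ∀ i, ∃ A : ℝ, 0 ≤ A ∧ ∀ y, |g i y| ≤ A := by
    intro i
    obtain ⟨A, hA⟩ := (Yicc_compact N).exists_bound_of_continuousOn (hg i).1.continuousOn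
    refine ⟨max A 0, le_max_right _ _, fun y => ?_⟩
    rw [← (hg i).2.frY_eq y]
    exact le_trans (hA _ (Yico_subset_Yicc N (frY_mem_Yico y))) (le_max_left _ _)
  choose Ag hAg0 hAg using hgb
  set B : ℝ := ∑ i, Aφ i * C i * Ag i with hBdef
  have hB0 : 0 ≤ B :=
    Finset.sum_nonneg fun i _ => mul_nonneg (mul_nonneg (hAφ0 i) (hC0 i)) (hAg0 i)
  have hfB : ∀ x y, ∀ ω ∈ E, |f x ω y| ≤ B := by
    intro x y ω hω
    rw [hf]
    refine le_trans (Finset.abs_sum_le_sum_abs _ _) (Finset.sum_le_sum fun i _ => ?_)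
    rw [abs_mul, abs_mul]
    exact mul_le_mul (mul_le_mul (hAφ i x) (hω i) (abs_nonneg _) (hAφ0 i)) (hAg i y)
      (abs_nonneg _) (mul_nonneg (hAφ0 i) (hC0 i))
  have hfBp : ∀ x y, ∀ ω ∈ E, |f x ω y| ^ p ≤ B ^ p := fun x y ω hω =>
    Real.rpow_le_rpow (abs_nonneg _) (hfB x y ω hω) hp0
  -- the compact support K
  set K : Set (RN N) := ⋃ i, tsupport (φ i) with hKdef
  have hKcomp : IsCompact K := isCompact_iUnion fun i => (hφ i).2.1
  have hKQ : K ⊆ Q := Set.iUnion_subset fun i => (hφ i).2.2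
  have hfK : ∀ x ∉ K, ∀ ω y, f x ω y = 0 := by
    intro x hx ω y
    rw [hf]
    apply Finset.sum_eq_zero
    intro i _
    have : φ i x = 0 := image_eq_zero_of_notMem_tsupport fun h => hx (Set.mem_iUnion.mpr ⟨i, h⟩)
    rw [this, zero_mul, zero_mul]
  -- the averaged function F
  set F : RN N → RN N → ℝ := fun x y => ∫ ω, |f x ω y| ^ p ∂μ with hFdef
  have hfmeas : ∀ x y, Measurable fun ω => f x ω y := by
    intro x y
    simp only [hf]
    exact Finset.measurable_sum _ fun i _ => ((hψm i).const_mul _).mul_const _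
  have hFc : Continuous fun q : RN N × RN N => F q.1 q.2 := by
    rw [continuous_iff_continuousAt]
    intro q
    apply continuousAt_of_dominated (bound := fun _ => B ^ p)
    · exact .of_forall fun q' =>
        (habs.measurable.comp (hfmeas q'.1 q'.2)).aestronglyMeasurable
    · refine .of_forall fun q' => ?_
      filter_upwards [hEae] with ω hω
      rw [Real.norm_eq_abs, abs_of_nonneg (Real.rpow_nonneg (abs_nonneg _) p)]
      exact hfBp _ _ ω hω
    · exact integrable_const _
    · refine .of_forall fun ω => ?_
      have hcf : Continuous fun q' : RN N × RN N => f q'.1 ω q'.2 := by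
        simp only [hf]
        exact continuous_finset_sum _ fun i _ =>
          (((hφ i).1.comp continuous_fst).mul continuous_const).mul
            ((hg i).1.comp continuous_snd)
      exact (habs.comp hcf).continuousAt
  have hFsupp : ∀ x ∉ K, ∀ y, F x y = 0 := by
    intro x hx y
    rw [hFdef]
    simp only
    have : ∀ ω, |f x ω y| ^ p = 0 := fun ω => by
      rw [hfK x hx ω y, abs_zero, Real.zero_rpow hpne]
    simp only [this, integral_zero]
  have hFper : ∀ x, IsYPeriodic (F x) := by
    intro x y k
    rw [hFdef]
    simp only
    congr 1
    funext ω
    congr 2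
    rw [hf, hf]
    refine Finset.sum_congr rfl fun i _ => ?_
    rw [(hg i).2 y k]
  -- finiteness of restricted measure on Q
  haveI hfinQ : IsFiniteMeasure ((volume : Measure (RN N)).restrict Q) :=
    ⟨by rw [Measure.restrict_apply_univ]; exact hQb.measure_lt_top⟩
  haveI hfinmuQ : IsFiniteMeasure (muQ Q μ) :=
    inferInstanceAs (IsFiniteMeasure ((volume.restrict Q).prod μ))
  haveI hfinY : IsFiniteMeasure ((volume : Measure (RN N)).restrict (Yico N)) :=
    ⟨by rw [Measure.restrict_apply_univ, volume_Yico]; exact ENNReal.one_lt_top⟩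
  -- LHS identification
  have hLHS : ∀ ε : ℝ, 0 < ε →
      (∫ z, |f z.1 (DS.T (ε⁻¹ • z.1) z.2) ((ε ^ 2)⁻¹ • z.1)| ^ p ∂(muQ Q μ))
        = ∫ x, F x ((ε ^ 2)⁻¹ • x) := by
    intro ε hε
    have hTm : Measurable fun z : RN N × Ω => DS.T (ε⁻¹ • z.1) z.2 :=
      DS.measurable_pair.comp ((measurable_fst.const_smul ε⁻¹).prodMk measurable_snd)
    have hfm : Measurable fun z : RN N × Ω =>
        f z.1 (DS.T (ε⁻¹ • z.1) z.2) ((ε ^ 2)⁻¹ • z.1) := by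
      simp only [hf]
      apply Finset.measurable_sum
      intro i _
      exact (((hφ i).1.measurable.comp measurable_fst).mul ((hψm i).comp hTm)).mul
        ((hg i).1.measurable.comp
          ((measurable_const_smul ((ε ^ 2)⁻¹)).comp measurable_fst))
    have hMeas : Measurable fun z : RN N × Ω =>
        |f z.1 (DS.T (ε⁻¹ • z.1) z.2) ((ε ^ 2)⁻¹ • z.1)| ^ p :=
      habs.measurable.comp hfm
    have hSnull : (muQ Q μ) ((fun z : RN N × Ω => DS.T (ε⁻¹ • z.1) z.2) ⁻¹' Eᶜ) = 0 := by
      show ((volume.restrict Q).prod μ) _ = 0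
      rw [Measure.measure_prod_null (hTm hEmeas.compl)]
      refine Filter.Eventually.of_forall fun x => ?_
      show μ (Prod.mk x ⁻¹' ((fun z : RN N × Ω => DS.T (ε⁻¹ • z.1) z.2) ⁻¹' Eᶜ)) = 0
      have hpre : (Prod.mk x ⁻¹' ((fun z : RN N × Ω => DS.T (ε⁻¹ • z.1) z.2) ⁻¹' Eᶜ))
          = DS.T (ε⁻¹ • x) ⁻¹' Eᶜ := rfl
      rw [hpre, (DS.measurePreserving (ε⁻¹ • x)).measure_preimage
        hEmeas.compl.nullMeasurableSet, hEc]
    have hae : ∀ᵐ z ∂(muQ Q μ), DS.T (ε⁻¹ • z.1) z.2 ∈ E := by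
      rw [ae_iff]
      exact hSnull
    have hInt : Integrable (fun z : RN N × Ω =>
        |f z.1 (DS.T (ε⁻¹ • z.1) z.2) ((ε ^ 2)⁻¹ • z.1)| ^ p) (muQ Q μ) := by
      refine Integrable.mono' (integrable_const (B ^ p)) hMeas.aestronglyMeasurable ?_
      filter_upwards [hae] with z hz
      rw [Real.norm_eq_abs, abs_of_nonneg (Real.rpow_nonneg (abs_nonneg _) p)]
      exact hfBp _ _ _ hz
    have hInt' : Integrable (fun z : RN N × Ω =>
        |f z.1 (DS.T (ε⁻¹ • z.1) z.2) ((ε ^ 2)⁻¹ • z.1)| ^ p)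
        (((volume : Measure (RN N)).restrict Q).prod μ) := hInt
    have h1 := MeasureTheory.integral_prod
      (fun z : RN N × Ω => |f z.1 (DS.T (ε⁻¹ • z.1) z.2) ((ε ^ 2)⁻¹ • z.1)| ^ p) hInt'
    have h2 : ∀ x : RN N, (∫ ω, |f x (DS.T (ε⁻¹ • x) ω) ((ε ^ 2)⁻¹ • x)| ^ p ∂μ)
        = F x ((ε ^ 2)⁻¹ • x) :=
      fun x => MeasurePreserving.integral_comp (DS.measurePreserving (ε⁻¹ • x))
        (dynEquiv DS (ε⁻¹ • x)).measurableEmbedding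
        (fun ω => |f x ω ((ε ^ 2)⁻¹ • x)| ^ p)
    calc (∫ z, |f z.1 (DS.T (ε⁻¹ • z.1) z.2) ((ε ^ 2)⁻¹ • z.1)| ^ p ∂(muQ Q μ))
        = ∫ x in Q, ∫ ω, |f x (DS.T (ε⁻¹ • x) ω) ((ε ^ 2)⁻¹ • x)| ^ p ∂μ := h1
      _ = ∫ x in Q, F x ((ε ^ 2)⁻¹ • x) := by
          refine integral_congr_ae (Filter.Eventually.of_forall fun x => h2 x)
      _ = ∫ x, F x ((ε ^ 2)⁻¹ • x) :=
          setIntegral_eq_integral_of_forall_compl_eq_zero fun x hx =>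
            hFsupp x (fun hk => hx (hKQ hk)) _
  -- RHS identification
  have hRHS : (∫ z, (∫ y in Ycube N, |f z.1 z.2 y| ^ p) ∂(muQ Q μ))
      = ∫ x, ∫ t in Yico N, F x t := by
    have hrw : ∀ z : RN N × Ω, (∫ y in Ycube N, |f z.1 z.2 y| ^ p)
        = ∫ y in Yico N, |f z.1 z.2 y| ^ p := fun z => by rw [restrict_Ycube_eq]
    simp only [hrw]
    have hHm : Measurable fun w : (RN N × Ω) × RN N => |f w.1.1 w.1.2 w.2| ^ p := by
      apply habs.measurable.comp
      simp only [hf]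
      apply Finset.measurable_sum
      intro i _
      exact (((hφ i).1.measurable.comp (measurable_fst.comp measurable_fst)).mul
        ((hψm i).comp (measurable_snd.comp measurable_fst))).mul
        ((hg i).1.measurable.comp measurable_snd)
    have hmuQnull : (muQ Q μ) (Set.univ ×ˢ Eᶜ) = 0 := by
      show ((volume.restrict Q).prod μ) (Set.univ ×ˢ Eᶜ) = 0
      rw [Measure.prod_prod, hEc, mul_zero]
    have hae2 : ∀ᵐ w ∂((muQ Q μ).prod ((volume : Measure (RN N)).restrict (Yico N))),
        w.1.2 ∈ E := by
      rw [ae_iff]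
      have hs : {w : (RN N × Ω) × RN N | ¬ w.1.2 ∈ E}
          = ((Set.univ ×ˢ Eᶜ) ×ˢ Set.univ) := by
        ext w; simp
      rw [hs, Measure.prod_prod, hmuQnull, zero_mul]
    have hHint : Integrable (fun w : (RN N × Ω) × RN N => |f w.1.1 w.1.2 w.2| ^ p)
        ((muQ Q μ).prod ((volume : Measure (RN N)).restrict (Yico N))) := by
      refine Integrable.mono' (integrable_const (B ^ p)) hHm.aestronglyMeasurable ?_
      filter_upwards [hae2] with w hw
      rw [Real.norm_eq_abs, abs_of_nonneg (Real.rpow_nonneg (abs_nonneg _) p)]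
      exact hfBp _ _ _ hw
    have hInt2 : Integrable (fun z : RN N × Ω => ∫ y in Yico N, |f z.1 z.2 y| ^ p)
        (((volume : Measure (RN N)).restrict Q).prod μ) := hHint.integral_prod_left
    have h3 := MeasureTheory.integral_prod
      (fun z : RN N × Ω => ∫ y in Yico N, |f z.1 z.2 y| ^ p) hInt2
    have h4 : ∀ x : RN N, (∫ ω, (∫ y in Yico N, |f x ω y| ^ p) ∂μ)
        = ∫ t in Yico N, F x t := by
      intro x
      have hm : Measurable (Function.uncurry fun ω y => |f x ω y| ^ p) := by
        apply habs.measurable.comp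
        simp only [hf]
        apply Finset.measurable_sum
        intro i _
        exact ((measurable_const.mul ((hψm i).comp measurable_fst)).mul
          ((hg i).1.measurable.comp measurable_snd))
      have haeω : ∀ᵐ w ∂(μ.prod ((volume : Measure (RN N)).restrict (Yico N))),
          w.1 ∈ E := by
        rw [ae_iff]
        have hs : {w : Ω × RN N | ¬ w.1 ∈ E} = Eᶜ ×ˢ Set.univ := by ext w; simp
        rw [hs, Measure.prod_prod, hEc, zero_mul]
      have hint : Integrable (Function.uncurry fun ω y => |f x ω y| ^ p)
          (μ.prod ((volume : Measure (RN N)).restrict (Yico N))) := by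
        refine Integrable.mono' (integrable_const (B ^ p)) hm.aestronglyMeasurable ?_
        filter_upwards [haeω] with w hw
        show ‖|f x w.1 w.2| ^ p‖ ≤ B ^ p
        rw [Real.norm_eq_abs, abs_of_nonneg (Real.rpow_nonneg (abs_nonneg _) p)]
        exact hfBp _ _ _ hw
      exact integral_integral_swap hint
    calc (∫ z, (∫ y in Yico N, |f z.1 z.2 y| ^ p) ∂(muQ Q μ))
        = ∫ x in Q, ∫ ω, (∫ y in Yico N, |f x ω y| ^ p) ∂μ := h3
      _ = ∫ x in Q, ∫ t in Yico N, F x t := by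
          refine integral_congr_ae (Filter.Eventually.of_forall fun x => h4 x)
      _ = ∫ x, ∫ t in Yico N, F x t :=
          setIntegral_eq_integral_of_forall_compl_eq_zero fun x hx => by
            have hxK : x ∉ K := fun h => hx (hKQ h)
            simp only [hFsupp x hxK, integral_zero]
  -- conclusion
  have hsq : Tendsto (fun ε : ℝ => ε ^ 2) (𝓝[>] (0:ℝ)) (𝓝[>] (0:ℝ)) := by
    apply tendsto_nhdsWithin_of_tendsto_nhds_of_eventually_within
    · have h2 : Tendsto (fun ε : ℝ => ε ^ 2) (𝓝 (0:ℝ)) (𝓝 (0:ℝ)) := by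
        have := (continuous_pow 2).tendsto (0:ℝ)
        simpa using this
      exact h2.mono_left nhdsWithin_le_nhds
    · filter_upwards [self_mem_nhdsWithin] with ε hε
      exact pow_pos (show (0:ℝ) < ε from hε) 2
  have hmain := (oscillation_limit F hFc K hKcomp hFsupp hFper).comp hsq
  rw [hRHS]
  refine Tendsto.congr' ?_ hmain
  filter_upwards [self_mem_nhdsWithin] with ε hε
  simp only [Function.comp]
  exact (hLHS ε hε).symm

end
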